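/- For every modulus κ with 0 < κ < 1, the function rn : ℝ → ℝ is twice differentiable and satisfies the second-order differential equation rn''(u) = 2·rn(u)³ − rn(u) for all real u. -/

import Mathlib

/-!
Writing the argument of `F = F(1/4, 3/4; 1/2; ·)` as `sin² θ`, the duplication formula
`(a)₂ₘ = 4ᵐ (a/2)ₘ ((a+1)/2)ₘ` identifies `F(sin² θ)` with the even part of the binomial
series of `(1 - sin θ)^(-1/2)`, and `1 ± sin θ = (cos (θ/2) ± sin (θ/2))²` then gives
`F(sin² θ) = cos (θ/2) / cos θ`. Hence `G' = cos (ψ/2) / cos ψ` with `ψ = arcsin (κ sin t)`,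
and along the inverse `φ` the chain rule collapses to `rn' = κ cos φ / 2`. Differentiating
once more and using `κ sin φ = sin ψ = 2 rn cos (ψ/2)` and `cos ψ = 1 - 2 rn²` gives
`rn'' = -rn cos ψ = 2 rn³ - rn`.
-/

open Real

/-- The Gauss hypergeometric series `F(a, b; c; x)` with real parameters. -/
noncomputable def hyperF (a b c x : ℝ) : ℝ :=
  ∑' n : ℕ, (Polynomial.eval a (ascPochhammer ℝ n) * Polynomial.eval b (ascPochhammer ℝ n) /
      (Polynomial.eval c (ascPochhammer ℝ n) * (Nat.factorial n : ℝ))) * x ^ n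

/-- `G κ T = ∫₀^T F(1/4, 3/4; 1/2; κ² sin² t) dt`. -/
noncomputable def G (κ T : ℝ) : ℝ :=
  ∫ t in (0:ℝ)..T, hyperF (1/4) (3/4) (1/2) (κ ^ 2 * Real.sin t ^ 2)

/-- The complete integral `K = G κ (π/2)`. -/
noncomputable def K (κ : ℝ) : ℝ := G κ (Real.pi / 2)

/-- The auxiliary function `ψ = arcsin (κ sin φ)`. -/
noncomputable def psi (κ : ℝ) (φ : ℝ → ℝ) (u : ℝ) : ℝ :=
  Real.arcsin (κ * Real.sin (φ u))

/-- The root function `rn = sin (ψ/2)`. -/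
noncomputable def rn (κ : ℝ) (φ : ℝ → ℝ) (u : ℝ) : ℝ :=
  Real.sin (psi κ φ u / 2)

theorem ascPochhammer_eval_two_mul {K : Type*} [Field K] [CharZero K] (a : K) (m : ℕ) :
    (ascPochhammer K (2 * m)).eval a
      = 4 ^ m * (ascPochhammer K m).eval (a / 2) * (ascPochhammer K m).eval ((a + 1) / 2) := by
  induction m with
  | zero => simp
  | succ m ih =>
    rw [show 2 * (m + 1) = 2 * m + 1 + 1 by ring, ascPochhammer_succ_eval, ascPochhammer_succ_eval,
      ih, ascPochhammer_succ_eval, ascPochhammer_succ_eval]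
    push_cast
    ring

theorem Ring.multichoose_eq_ascPochhammer_eval_div {K : Type*} [Field K] [CharZero K] (a : K)
    (n : ℕ) : Ring.multichoose a n = (ascPochhammer K n).eval a / n.factorial := by
  rw [eq_div_iff (Nat.cast_ne_zero.2 n.factorial_ne_zero), mul_comm, ← nsmul_eq_mul,
    Ring.factorial_nsmul_multichoose_eq_ascPochhammer,
    Polynomial.ascPochhammer_smeval_cast, Polynomial.ascPochhammer_smeval_eq_eval]

theorem hasSum_inv_sqrt_one_sub {x : ℝ} (hx : |x| < 1) :
    HasSum (fun n => (ascPochhammer ℝ n).eval (1 / 2) / n.factorial * x ^ n) (√(1 - x))⁻¹ := by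
  have h := (Real.one_div_one_sub_rpow_hasFPowerSeriesOnBall_zero (1 / 2)).hasSum
    (y := x) (by simpa [Metric.mem_eball, edist_dist] using hx)
  simp only [FormalMultilinearSeries.ofScalars_apply_eq', ← Ring.multichoose_eq,
    Ring.multichoose_eq_ascPochhammer_eval_div, smul_eq_mul, zero_add] at h
  rwa [Real.sqrt_eq_rpow, ← one_div]

theorem HasSum.comp_two_mul_of_odd_eq_zero {α : Type*} [AddCommMonoid α] [TopologicalSpace α]
    {f : ℕ → α} {a : α} (hf : HasSum f a) (hodd : ∀ n, Odd n → f n = 0) :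
    HasSum (fun m => f (2 * m)) a := by
  have hinj : Function.Injective (fun m : ℕ => 2 * m) := fun a b h => by simpa using h
  refine (hinj.hasSum_iff fun n hn => hodd n ?_).2 hf
  rcases Nat.even_or_odd n with ⟨k, rfl⟩ | h
  · exact absurd ⟨k, by dsimp; ring⟩ hn
  · exact h

theorem ascPochhammer_half_div_factorial_two_mul (m : ℕ) :
    (ascPochhammer ℝ (2 * m)).eval (1 / 2) / (2 * m).factorial
      = (ascPochhammer ℝ m).eval (1 / 4) * (ascPochhammer ℝ m).eval (3 / 4)
        / ((ascPochhammer ℝ m).eval (1 / 2) * m.factorial) := by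
  rw [← ascPochhammer_eval_one, ← ascPochhammer_eval_one, ascPochhammer_eval_two_mul,
    ascPochhammer_eval_two_mul]
  norm_num
  rw [mul_assoc, mul_assoc, mul_div_mul_left _ _ (by positivity)]

theorem hasSum_hyperF_sq {s : ℝ} (hs : |s| < 1) :
    HasSum (fun n => (ascPochhammer ℝ n).eval (1 / 4) * (ascPochhammer ℝ n).eval (3 / 4)
        / ((ascPochhammer ℝ n).eval (1 / 2) * n.factorial) * (s ^ 2) ^ n)
      (((√(1 - s))⁻¹ + (√(1 + s))⁻¹) / 2) := by
  have hsum := ((hasSum_inv_sqrt_one_sub hs).add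
    (hasSum_inv_sqrt_one_sub (x := -s) (by rwa [abs_neg]))).div_const 2
  rw [sub_neg_eq_add] at hsum
  refine (hsum.comp_two_mul_of_odd_eq_zero fun n hn => ?_).congr_fun fun m => ?_
  · rw [hn.neg_pow]
    ring
  · simp only [(even_two_mul m).neg_pow, ← ascPochhammer_half_div_factorial_two_mul, pow_mul]
    ring

theorem hyperF_sin_sq {θ : ℝ} (hθ : |θ| < π / 2) :
    hyperF (1 / 4) (3 / 4) (1 / 2) (sin θ ^ 2) = cos (θ / 2) / cos θ := by
  obtain ⟨hθl, hθr⟩ := abs_lt.1 hθ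
  have hcos : 0 < cos θ := cos_pos_of_mem_Ioo ⟨hθl, hθr⟩
  have hcos_half : 0 < cos (θ / 2) := cos_pos_of_mem_Ioo ⟨by linarith, by linarith⟩
  have hcos_eq : cos θ = cos (θ / 2) ^ 2 - sin (θ / 2) ^ 2 := by
    rw [← cos_two_mul', mul_div_cancel₀ θ two_ne_zero]
  have hsin_eq : sin θ = 2 * sin (θ / 2) * cos (θ / 2) := by
    rw [← sin_two_mul, mul_div_cancel₀ θ two_ne_zero]
  have hpyth := sin_sq_add_cos_sq (θ / 2)
  have hsin : |sin θ| < 1 := abs_lt_of_sq_lt_sq (by nlinarith [sin_sq_add_cos_sq θ]) zero_le_one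
  -- `cos θ > 0` forces `|sin (θ/2)| < cos (θ/2)`, so both square roots below are explicit
  obtain ⟨hd₁, hd₂⟩ := abs_lt_of_sq_lt_sq' (a := sin (θ / 2)) (by linarith) hcos_half.le
  have hsqrt_sub : √(1 - sin θ) = cos (θ / 2) - sin (θ / 2) := by
    rw [← sqrt_sq (by linarith : 0 ≤ cos (θ / 2) - sin (θ / 2))]
    congr 1
    linear_combination -hsin_eq - hpyth
  have hsqrt_add : √(1 + sin θ) = cos (θ / 2) + sin (θ / 2) := by
    rw [← sqrt_sq (by linarith : 0 ≤ cos (θ / 2) + sin (θ / 2))]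
    congr 1
    linear_combination hsin_eq - hpyth
  have hsub : cos (θ / 2) - sin (θ / 2) ≠ 0 := by linarith
  have hadd : cos (θ / 2) + sin (θ / 2) ≠ 0 := by linarith
  rw [hyperF, (hasSum_hyperF_sq hsin).tsum_eq, hsqrt_sub, hsqrt_add]
  field_simp
  linear_combination 2 * cos (θ / 2) * hcos_eq

theorem HasDerivAt.of_rightInverse {f g f' : ℝ → ℝ} (hf : ∀ x, HasDerivAt f (f' x) x)
    (hf' : ∀ x, 0 < f' x) (hg : Function.RightInverse g f) (y : ℝ) :
    HasDerivAt g (f' (g y))⁻¹ y := by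
  have hf_mono : StrictMono f :=
    strictMono_of_deriv_pos fun x => (hf x).deriv ▸ hf' x
  have hg_mono : StrictMono g := fun a b hab => by
    rwa [← hf_mono.lt_iff_lt, hg a, hg b]
  have hg_surj : Function.Surjective g := fun x => ⟨f x, hf_mono.injective (hg (f x))⟩
  exact .of_local_left_inverse (hg_mono.monotone.continuous_of_surjective hg_surj).continuousAt
    (hf (g y)) (hf' (g y)).ne' (.of_forall hg)

section Modulus

variable {κ : ℝ} (hκ : |κ| < 1)
include hκ

theorem abs_mul_sin_lt_one (t : ℝ) : |κ * sin t| < 1 := by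
  rw [abs_mul]
  exact (mul_le_of_le_one_right (abs_nonneg κ) (abs_sin_le_one t)).trans_lt hκ

theorem abs_arcsin_mul_sin_lt (t : ℝ) : |arcsin (κ * sin t)| < π / 2 := by
  obtain ⟨h₁, h₂⟩ := abs_lt.1 (abs_mul_sin_lt_one hκ t)
  exact abs_lt.2 ⟨neg_pi_div_two_lt_arcsin.2 h₁, arcsin_lt_pi_div_two.2 h₂⟩

theorem cos_arcsin_mul_sin_pos (t : ℝ) : 0 < cos (arcsin (κ * sin t)) :=
  cos_pos_of_mem_Ioo (abs_lt.1 (abs_arcsin_mul_sin_lt hκ t))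

theorem cos_half_arcsin_mul_sin_pos (t : ℝ) : 0 < cos (arcsin (κ * sin t) / 2) := by
  obtain ⟨h₁, h₂⟩ := abs_lt.1 (abs_arcsin_mul_sin_lt hκ t)
  exact cos_pos_of_mem_Ioo ⟨by linarith [pi_pos], by linarith [pi_pos]⟩

theorem hasDerivAt_G (T : ℝ) :
    HasDerivAt (G κ) (cos (arcsin (κ * sin T) / 2) / cos (arcsin (κ * sin T))) T := by
  have hintegrand : (fun t => hyperF (1 / 4) (3 / 4) (1 / 2) (κ ^ 2 * sin t ^ 2))
      = fun t => cos (arcsin (κ * sin t) / 2) / cos (arcsin (κ * sin t)) := by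
    ext t
    obtain ⟨h₁, h₂⟩ := abs_lt.1 (abs_mul_sin_lt_one hκ t)
    rw [← hyperF_sin_sq (abs_arcsin_mul_sin_lt hκ t), sin_arcsin h₁.le h₂.le, mul_pow]
  have hcont : Continuous fun t => cos (arcsin (κ * sin t) / 2) / cos (arcsin (κ * sin t)) :=
    .div (by fun_prop) (by fun_prop) fun t => (cos_arcsin_mul_sin_pos hκ t).ne'
  have := intervalIntegral.integral_hasDerivAt_right (hcont.intervalIntegrable 0 T)
    (hcont.stronglyMeasurableAtFilter _ _) hcont.continuousAt
  rw [← hintegrand] at this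
  exact this

variable {φ : ℝ → ℝ} (hφ : Function.RightInverse φ (G κ))
include hφ

theorem hasDerivAt_inverse_G (u : ℝ) :
    HasDerivAt φ (cos (psi κ φ u) / cos (psi κ φ u / 2)) u := by
  rw [← inv_div]
  exact HasDerivAt.of_rightInverse (hasDerivAt_G hκ)
    (fun t => div_pos (cos_half_arcsin_mul_sin_pos hκ t) (cos_arcsin_mul_sin_pos hκ t)) hφ u

theorem hasDerivAt_rn (u : ℝ) : HasDerivAt (rn κ φ) (κ * cos (φ u) / 2) u := by
  obtain ⟨h₁, h₂⟩ := abs_lt.1 (abs_mul_sin_lt_one hκ (φ u))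
  have hψ := (hasDerivAt_arcsin h₁.ne' h₂.ne).comp u
    (((hasDerivAt_sin (φ u)).comp u (hasDerivAt_inverse_G hκ hφ u)).const_mul κ)
  refine ((hasDerivAt_sin _).comp u (hψ.div_const 2)).congr_deriv ?_
  have hcos := cos_arcsin_mul_sin_pos hκ (φ u)
  have hcos_half := cos_half_arcsin_mul_sin_pos hκ (φ u)
  rw [← cos_arcsin]
  simp only [Function.comp_apply, psi]
  field_simp

theorem hasDerivAt_mul_cos_div_two (u : ℝ) :
    HasDerivAt (fun v => κ * cos (φ v) / 2) (2 * rn κ φ u ^ 3 - rn κ φ u) u := by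
  refine ((((hasDerivAt_cos (φ u)).comp u (hasDerivAt_inverse_G hκ hφ u)).const_mul κ).div_const
    2).congr_deriv ?_
  obtain ⟨h₁, h₂⟩ := abs_lt.1 (abs_mul_sin_lt_one hκ (φ u))
  have hsin : κ * sin (φ u) = 2 * rn κ φ u * cos (psi κ φ u / 2) := by
    rw [rn, ← sin_two_mul, mul_div_cancel₀ _ two_ne_zero, psi, sin_arcsin h₁.le h₂.le]
  have hcos : cos (psi κ φ u) = 1 - 2 * rn κ φ u ^ 2 := by
    rw [rn, ← cos_two_mul_eq_one_sub, mul_div_cancel₀ _ two_ne_zero]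
  have hcos_half : 0 < cos (psi κ φ u / 2) := cos_half_arcsin_mul_sin_pos hκ (φ u)
  rw [hcos]
  field_simp
  linear_combination (2 * rn κ φ u ^ 2 - 1) * hsin

end Modulus

theorem stmt11_general (κ : ℝ) (hκ₀ : 0 < κ) (hκ₁ : κ < 1)
    (φ : ℝ → ℝ)
    (hφ₂ : Function.RightInverse φ (G κ)) :
    Differentiable ℝ (rn κ φ) ∧ Differentiable ℝ (deriv (rn κ φ)) ∧
      ∀ u : ℝ, deriv (deriv (rn κ φ)) u = 2 * (rn κ φ u) ^ 3 - rn κ φ u := by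
  have hκ : |κ| < 1 := abs_lt.2 ⟨by linarith, hκ₁⟩
  have hderiv : deriv (rn κ φ) = fun v => κ * cos (φ v) / 2 :=
    funext fun u => (hasDerivAt_rn hκ hφ₂ u).deriv
  refine ⟨fun u => (hasDerivAt_rn hκ hφ₂ u).differentiableAt, ?_, fun u => ?_⟩
  · rw [hderiv]
    exact fun u => (hasDerivAt_mul_cos_div_two hκ hφ₂ u).differentiableAt
  · rw [hderiv]
    exact (hasDerivAt_mul_cos_div_two hκ hφ₂ u).deriv

theorem stmt11 (κ : ℝ) (hκ₀ : 0 < κ) (hκ₁ : κ < 1)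
    (φ : ℝ → ℝ) (hφ₁ : Function.LeftInverse φ (G κ))
    (hφ₂ : Function.RightInverse φ (G κ)) :
    Differentiable ℝ (rn κ φ) ∧ Differentiable ℝ (deriv (rn κ φ)) ∧
      ∀ u : ℝ, deriv (deriv (rn κ φ)) u = 2 * (rn κ φ u) ^ 3 - rn κ φ u :=
  stmt11_general κ hκ₀ hκ₁ φ hφ₂
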